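/- arXiv:2006.10579 — 3 statements merged into one kernel-verified Lean document; each statement's English description precedes it below -/
import Mathlib

section
/- Let B > 0 and let f, g ∈ PW²_B be real-valued on the real line (i.e., f(t) ∈ ℝ and g(t) ∈ ℝ for all t ∈ ℝ). If |f(t)| = |g(t)| for all t ∈ ℝ, then f = g or f = −g (as functions on ℂ). -/
open MeasureTheory Complex Real Set

/-- The short-time Fourier transform of `f` with window `φ`:
`V_φ f (x, ω) = ∫ f(t) conj(φ(t-x)) e^{-2πitω} dt`. -/
noncomputable def STFT (φ f : ℝ → ℂ) (x ω : ℝ) : ℂ :=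
  ∫ t : ℝ, f t * (starRingEnd ℂ) (φ (t - x)) *
    Complex.exp (-2 * Real.pi * Complex.I * t * ω)

/-- The ambiguity function of `f`: `A f (x, ω) = e^{πixω} V_f f (x, ω)`. -/
noncomputable def ambiguity (f : ℝ → ℂ) (x ω : ℝ) : ℂ :=
  Complex.exp (Real.pi * Complex.I * x * ω) * STFT f f x ω

/-- The Paley–Wiener space `PW^p_B`: `f : ℂ → ℂ` belongs to it iff there is
`F ∈ L^p([-B,B])` with `f(z) = ∫_{-B}^B F(ξ) e^{2πiξz} dξ` for all `z`. -/
def MemPW (B : ℝ) (p : ENNReal) (f : ℂ → ℂ) : Prop :=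
  ∃ F : ℝ → ℂ, MeasureTheory.MemLp F p (volume.restrict (Set.Icc (-B) B)) ∧
    ∀ z : ℂ, f z = ∫ ξ in Set.Icc (-B) B, F ξ * Complex.exp (2 * Real.pi * Complex.I * ξ * z)

/-!
On the real line `|f| = |g|` together with real-valuedness gives `f² = g²`, i.e.
`(f - g)(f + g) = 0` on `ℝ`. Paley–Wiener functions are entire, so by the identity theorem
`(f - g)(f + g) = 0` on all of `ℂ`, and since the entire functions form an integral domain,
`f - g = 0` or `f + g = 0`.
-/

open Filter Metric Topology

lemma Complex.eq_or_eq_neg_of_im_eq_zero_of_norm_eq {z w : ℂ} (hz : z.im = 0) (hw : w.im = 0)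
    (h : ‖z‖ = ‖w‖) : z = w ∨ z = -w := by
  have hz' : z = (z.re : ℂ) := Complex.ext (by simp) (by simp [hz])
  have hw' : w = (w.re : ℂ) := Complex.ext (by simp) (by simp [hw])
  rw [hz', hw', norm_real, norm_real, Real.norm_eq_abs, Real.norm_eq_abs] at h
  rw [hz', hw']
  rcases abs_eq_abs.1 h with h | h
  · exact Or.inl (by rw [h])
  · exact Or.inr (by rw [h, ofReal_neg])

lemma Differentiable.eq_zero_of_forall_ofReal_eq_zero {h : ℂ → ℂ} (hh : Differentiable ℂ h)
    (h0 : ∀ t : ℝ, h t = 0) : h = 0 := by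
  have hreal : Tendsto ((↑) : ℝ → ℂ) (𝓝[≠] 0) (𝓝[≠] 0) :=
    continuous_ofReal.continuousWithinAt.tendsto_nhdsWithin fun _ ht ↦ by simpa using ht
  exact AnalyticOnNhd.eq_of_frequently_eq (fun z _ ↦ hh.analyticAt z) analyticOnNhd_const
    (hreal.frequently (Frequently.of_forall h0))

lemma norm_cexp_ofReal_mul_le {ξ R r : ℝ} {z : ℂ} (hξ : |ξ| ≤ R) (hz : ‖z‖ ≤ r) :
    ‖cexp (ξ * z)‖ ≤ Real.exp (R * r) := by
  refine (norm_exp_le_exp_norm _).trans (Real.exp_le_exp.2 ?_)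
  rw [norm_mul, norm_real, Real.norm_eq_abs]
  exact mul_le_mul hξ hz (norm_nonneg z) ((abs_nonneg ξ).trans hξ)

theorem differentiable_integral_mul_cexp {μ : Measure ℝ} {F : ℝ → ℂ} {R : ℝ}
    (hF : Integrable F μ) (hsupp : ∀ᵐ ξ ∂μ, |ξ| ≤ R) :
    Differentiable ℂ fun z : ℂ ↦ ∫ ξ, F ξ * cexp (ξ * z) ∂μ := by
  intro z₀
  set r := ‖z₀‖ + 1
  have hball : ∀ z ∈ ball z₀ 1, ‖z‖ ≤ r := fun z hz ↦ by
    have := norm_le_norm_add_norm_sub' z z₀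
    have := (mem_ball_iff_norm.1 hz).le
    linarith
  have hmeas : ∀ z : ℂ, AEStronglyMeasurable (fun ξ ↦ F ξ * cexp (ξ * z)) μ := fun z ↦
    hF.aestronglyMeasurable.mul (by fun_prop : Continuous fun ξ : ℝ ↦ cexp (ξ * z)).aestronglyMeasurable
  have hint : Integrable (fun ξ ↦ F ξ * cexp (ξ * z₀)) μ := by
    refine (hF.norm.mul_const (Real.exp (R * r))).mono' (hmeas z₀) ?_
    filter_upwards [hsupp] with ξ hξ
    rw [norm_mul]
    gcongr
    exact norm_cexp_ofReal_mul_le hξ (hball z₀ (mem_ball_self one_pos))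
  have hderiv := hasDerivAt_integral_of_dominated_loc_of_deriv_le
    (F' := fun z ξ ↦ F ξ * (cexp (ξ * z) * ξ)) (bound := fun ξ ↦ ‖F ξ‖ * (Real.exp (R * r) * R))
    (ball_mem_nhds z₀ one_pos) (Eventually.of_forall hmeas) hint
    (hF.aestronglyMeasurable.mul
      (by fun_prop : Continuous fun ξ : ℝ ↦ cexp (ξ * z₀) * ξ).aestronglyMeasurable)
    (by
      filter_upwards [hsupp] with ξ hξ z hz
      rw [norm_mul, norm_mul, norm_real, Real.norm_eq_abs]
      gcongr
      exact norm_cexp_ofReal_mul_le hξ (hball z hz))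
    (hF.norm.mul_const _)
    (Eventually.of_forall fun ξ z _ ↦
      (((hasDerivAt_id z).const_mul (ξ : ℂ)).cexp.const_mul (F ξ)).congr_deriv (by simp))
  exact hderiv.2.differentiableAt

theorem MemPW.differentiable {B : ℝ} {p : ENNReal} {f : ℂ → ℂ} (hp : 1 ≤ p) (hf : MemPW B p f) :
    Differentiable ℂ f := by
  obtain ⟨F, hF, hrep⟩ := hf
  have hsupp : ∀ᵐ ξ ∂(volume.restrict (Icc (-B) B)), |ξ| ≤ B := by
    filter_upwards [ae_restrict_mem measurableSet_Icc] with ξ hξ using abs_le.2 hξ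
  have hf : f = fun z ↦ ∫ ξ in Icc (-B) B, F ξ * cexp (ξ * (2 * π * I * z)) := by
    funext z
    rw [hrep z]
    congr 1 with ξ
    ring_nf
  rw [hf]
  exact (differentiable_integral_mul_cexp (hF.integrable hp) hsupp).comp
    (differentiable_id.const_mul _)

theorem paley_wiener_real_sign_retrieval_general (B : ℝ) (f g : ℂ → ℂ)
    (hf : MemPW B 2 f) (hg : MemPW B 2 g)
    (hfr : ∀ t : ℝ, (f t).im = 0) (hgr : ∀ t : ℝ, (g t).im = 0)
    (habs : ∀ t : ℝ, ‖f t‖ = ‖g t‖) :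
    f = g ∨ f = -g := by
  have hfd : Differentiable ℂ f := hf.differentiable one_le_two
  have hgd : Differentiable ℂ g := hg.differentiable one_le_two
  have hprod : (fun z ↦ (f z - g z) * (f z + g z)) = 0 :=
    ((hfd.sub hgd).mul (hfd.add hgd)).eq_zero_of_forall_ofReal_eq_zero fun t ↦ by
      rcases Complex.eq_or_eq_neg_of_im_eq_zero_of_norm_eq (hfr t) (hgr t) (habs t) with h | h <;>
        simp [h]
  rcases AnalyticOnNhd.eq_zero_or_eq_zero_of_mul_eq_zero (fun z _ ↦ (hfd.sub hgd).analyticAt z)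
    (fun z _ ↦ (hfd.add hgd).analyticAt z) (fun z _ ↦ congrFun hprod z) isPreconnected_univ
    with h | h
  · exact Or.inl (funext fun z ↦ sub_eq_zero.1 (h z trivial))
  · exact Or.inr (funext fun z ↦ eq_neg_of_add_eq_zero_left (h z trivial))

/-- a function in `PW²_B` that is real-valued on the real line is determined
up to global sign by its absolute values on the real line. -/
theorem paley_wiener_real_sign_retrieval (B : ℝ) (hB : 0 < B) (f g : ℂ → ℂ)
    (hf : MemPW B 2 f) (hg : MemPW B 2 g)
    (hfr : ∀ t : ℝ, (f t).im = 0) (hgr : ∀ t : ℝ, (g t).im = 0)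
    (habs : ∀ t : ℝ, ‖f t‖ = ‖g t‖) :
    f = g ∨ f = -g :=
  paley_wiener_real_sign_retrieval_general B f g hf hg hfr hgr habs
end

section
/- Let ε, B > 0 with ε < 2B, set c = 1/(2B − ε), and define f(z) = sinc(εz)·e^{πi(2B−ε)z} and g(z) = sinc(εz)·e^{−πi(2B−ε)z} for z ∈ ℂ. Then: (1) f, g ∈ PW²_B, with f(z) = (1/ε)∫_{−B}^{B} χ_{[B−ε, B]}(ξ) e^{2πi ξ z} dξ and g(z) = (1/ε)∫_{−B}^{B} χ_{[−B, −B+ε]}(ξ) e^{2πi ξ z} dξ; (2) |f(t)| = |g(t)| for all t ∈ ℝ; (3) f(t)·conj(f(t − c)) = g(t)·conj(g(t − c)) for all t ∈ ℝ; (4) there is no α ∈ ℝ with f = e^{iα} g. -/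
open MeasureTheory Complex Real Set

/-- The (complex) normalized sinc function: `sinc z = sin(πz)/(πz)` for `z ≠ 0`, `sinc 0 = 1`. -/
noncomputable def csinc (z : ℂ) : ℂ :=
  if z = 0 then 1 else Complex.sin (Real.pi * z) / (Real.pi * z)

/-! `f` and `g` are the inverse Fourier transforms of `ε⁻¹` times the indicators of the two end
intervals `[B - ε, B]` and `[-B, -B + ε]` of `[-B, B]`, i.e. one `sinc` modulated by `e^{± iωz}`,
`ω = π(2B - ε)`. On `ℝ` the modulations are unimodular, and in the correlations they contribute
`e^{± iωc} = e^{± iπ} = -1`, the same for both. Evaluating `f = e^{iα} g` at `0` forces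
`e^{iα} = 1`, and at `i` it would force `e^{-ω} = e^{ω}`. -/

open scoped ComplexConjugate

lemma csinc_zero : csinc 0 = 1 := if_pos rfl

lemma csinc_ofReal_mul_I_ne_zero (x : ℝ) : csinc (x * I) ≠ 0 := by
  rcases eq_or_ne x 0 with rfl | hx
  · simp [csinc_zero]
  have hxI : (x : ℂ) * I ≠ 0 := mul_ne_zero (ofReal_ne_zero.mpr hx) I_ne_zero
  rw [csinc, if_neg hxI]
  refine div_ne_zero ?_ (mul_ne_zero (ofReal_ne_zero.mpr pi_ne_zero) hxI)
  rw [← mul_assoc, ← ofReal_mul, sin_mul_I, ← ofReal_sinh]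
  exact mul_ne_zero (ofReal_ne_zero.mpr (Real.sinh_ne_zero.mpr (mul_ne_zero pi_ne_zero hx)))
    I_ne_zero

lemma cexp_sub_cexp_div_eq_csinc (a b : ℂ) {z : ℂ} (hz : z ≠ 0) :
    (cexp (2 * π * I * z * b) - cexp (2 * π * I * z * a)) / (2 * π * I * z) =
      (b - a) * csinc ((b - a) * z) * cexp (π * I * (a + b) * z) := by
  rcases eq_or_ne a b with rfl | hab
  · simp
  have hba : (b - a) * z ≠ 0 := mul_ne_zero (sub_ne_zero.mpr hab.symm) hz
  -- split both exponents around the midpoint `π i (a + b) z`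
  set m := cexp (π * I * (a + b) * z)
  have ha : cexp (2 * π * I * z * a) = cexp (-(π * ((b - a) * z)) * I) * m := by
    rw [← Complex.exp_add]; ring_nf
  have hb : cexp (2 * π * I * z * b) = cexp (π * ((b - a) * z) * I) * m := by
    rw [← Complex.exp_add]; ring_nf
  rw [csinc, if_neg hba, Complex.sin, ha, hb]
  field_simp
  ring_nf
  rw [I_sq]
  ring

lemma intervalIntegral_cexp_eq_csinc (a b : ℝ) (z : ℂ) :
    ∫ ξ in a..b, cexp (2 * π * I * ξ * z) =
      (b - a) * csinc ((b - a) * z) * cexp (π * I * (a + b) * z) := by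
  rcases eq_or_ne z 0 with rfl | hz
  · simp [csinc_zero]
  have hc : 2 * π * I * z ≠ 0 := by simp [hz, pi_ne_zero]
  simp_rw [show ∀ ξ : ℝ, 2 * π * I * ξ * z = 2 * π * I * z * ξ from fun ξ => by ring]
  rw [integral_exp_mul_complex hc, cexp_sub_cexp_div_eq_csinc _ _ hz]

lemma setIntegral_indicator_Icc_one_mul {s : Set ℝ} {a b : ℝ} (hab : a ≤ b) (hs : Icc a b ⊆ s)
    (φ : ℝ → ℂ) :
    ∫ ξ in s, (Icc a b).indicator (fun _ => (1 : ℂ)) ξ * φ ξ = ∫ ξ in a..b, φ ξ := by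
  simp_rw [← indicator_mul_left, one_mul]
  rw [integral_indicator measurableSet_Icc, Measure.restrict_restrict measurableSet_Icc,
    inter_eq_left.mpr hs, integral_Icc_eq_integral_Ioc, intervalIntegral.integral_of_le hab]

lemma setIntegral_indicator_Icc_mul_cexp {B a b : ℝ} (ha : -B ≤ a) (hab : a ≤ b) (hb : b ≤ B)
    (z : ℂ) :
    ∫ ξ in Icc (-B) B, (Icc a b).indicator (fun _ => (1 : ℂ)) ξ * cexp (2 * π * I * ξ * z) =
      (b - a) * csinc ((b - a) * z) * cexp (π * I * (a + b) * z) := by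
  rw [setIntegral_indicator_Icc_one_mul hab (Icc_subset_Icc ha hb), intervalIntegral_cexp_eq_csinc]

lemma memLp_indicator_Icc_one (B a b : ℝ) (p : ENNReal) :
    MemLp ((Icc a b).indicator fun _ => (1 : ℂ)) p (volume.restrict (Icc (-B) B)) :=
  (memLp_const 1).indicator measurableSet_Icc

lemma memPW_of_eq_const_mul {B : ℝ} {p : ENNReal} {F : ℝ → ℂ}
    (hF : MemLp F p (volume.restrict (Icc (-B) B))) (r : ℂ) {f : ℂ → ℂ}
    (hf : ∀ z, f z = r * ∫ ξ in Icc (-B) B, F ξ * cexp (2 * π * I * ξ * z)) :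
    MemPW B p f :=
  ⟨r • F, hF.const_smul r, fun z => by
    rw [hf, ← integral_const_mul]; simp only [Pi.smul_apply, smul_eq_mul, mul_assoc]⟩

lemma norm_cexp_I_mul_ofReal_mul_ofReal (ω t : ℝ) : ‖cexp (I * ω * t)‖ = 1 := by
  rw [show I * ω * t = ((ω * t : ℝ) : ℂ) * I by push_cast; ring, norm_exp_ofReal_mul_I]

lemma mul_cexp_mul_conj_mul_cexp (u v : ℂ) (ω a b : ℝ) :
    u * cexp (I * ω * a) * conj (v * cexp (I * ω * b)) =
      u * conj v * cexp (I * ↑(ω * (a - b))) := by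
  rw [map_mul, ← Complex.exp_conj, mul_mul_mul_comm, ← Complex.exp_add]
  simp only [map_mul, conj_I, conj_ofReal]
  push_cast
  ring_nf

lemma mul_cexp_ne_phase_mul_mul_cexp_neg {s : ℂ → ℂ} (h0 : s 0 ≠ 0) (hI : s I ≠ 0) {ω : ℝ}
    (hω : ω ≠ 0) (α : ℝ) :
    (fun z => s z * cexp (I * ω * z)) ≠ fun z => cexp (I * α) * (s z * cexp (I * ↑(-ω) * z)) := by
  intro h
  have hα : cexp (I * α) = 1 := by
    simpa [h0] using (congrFun h 0).symm
  have hexp : cexp (I * ω * I) = cexp (I * ↑(-ω) * I) := by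
    simpa [hα, hI] using congrFun h I
  have : Real.exp (-ω) = Real.exp ω := by
    rw [show I * ω * I = ((-ω : ℝ) : ℂ) by push_cast; ring_nf; rw [I_sq]; ring,
      show I * ↑(-ω) * I = ((ω : ℝ) : ℂ) by push_cast; ring_nf; rw [I_sq]; ring,
      ← ofReal_exp, ← ofReal_exp, ofReal_inj] at hexp
    exact hexp
  exact hω (by linarith [Real.exp_injective this])

theorem sinc_two_line_counterexample_general (ε B : ℝ) (hε : 0 < ε) (hεB : ε < 2 * B)
    (c : ℝ) (hc : c = 1 / (2 * B - ε))
    (f g : ℂ → ℂ)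
    (hfdef : ∀ z : ℂ, f z = csinc (ε * z) * Complex.exp (Real.pi * Complex.I * (2 * B - ε) * z))
    (hgdef : ∀ z : ℂ, g z = csinc (ε * z) * Complex.exp (-(Real.pi * Complex.I * (2 * B - ε) * z))) :
    ((∀ z : ℂ, f z = (1 / ε : ℂ) *
        ∫ ξ in Set.Icc (-B) B, Set.indicator (Set.Icc (B - ε) B) (fun _ => (1 : ℂ)) ξ *
          Complex.exp (2 * Real.pi * Complex.I * ξ * z)) ∧
      MemPW B 2 f) ∧
    ((∀ z : ℂ, g z = (1 / ε : ℂ) *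
        ∫ ξ in Set.Icc (-B) B, Set.indicator (Set.Icc (-B) (-B + ε)) (fun _ => (1 : ℂ)) ξ *
          Complex.exp (2 * Real.pi * Complex.I * ξ * z)) ∧
      MemPW B 2 g) ∧
    (∀ t : ℝ, ‖f t‖ = ‖g t‖) ∧
    (∀ t : ℝ, f t * (starRingEnd ℂ) (f ((t - c : ℝ) : ℂ)) =
      g t * (starRingEnd ℂ) (g ((t - c : ℝ) : ℂ))) ∧
    ¬ ∃ α : ℝ, f = fun z => Complex.exp (Complex.I * α) * g z := by
  set ω : ℝ := π * (2 * B - ε)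
  have hf : f = fun z => csinc (ε * z) * cexp (I * ω * z) :=
    funext fun z => by rw [hfdef]; congr 2; simp only [ω]; push_cast; ring
  have hg : g = fun z => csinc (ε * z) * cexp (I * ↑(-ω) * z) :=
    funext fun z => by rw [hgdef]; congr 2; simp only [ω]; push_cast; ring
  have hfrep : ∀ z : ℂ, f z = (1 / ε : ℂ) * ∫ ξ in Icc (-B) B,
      (Icc (B - ε) B).indicator (fun _ => (1 : ℂ)) ξ * cexp (2 * π * I * ξ * z) := fun z => by
    rw [setIntegral_indicator_Icc_mul_cexp (by linarith) (by linarith) le_rfl, hfdef]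
    field_simp [hε.ne']; push_cast; ring_nf
  have hgrep : ∀ z : ℂ, g z = (1 / ε : ℂ) * ∫ ξ in Icc (-B) B,
      (Icc (-B) (-B + ε)).indicator (fun _ => (1 : ℂ)) ξ * cexp (2 * π * I * ξ * z) := fun z => by
    rw [setIntegral_indicator_Icc_mul_cexp le_rfl (by linarith) (by linarith), hgdef]
    field_simp [hε.ne']; push_cast; ring_nf
  refine ⟨⟨hfrep, memPW_of_eq_const_mul (memLp_indicator_Icc_one _ _ _ _) _ hfrep⟩,
    ⟨hgrep, memPW_of_eq_const_mul (memLp_indicator_Icc_one _ _ _ _) _ hgrep⟩,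
    fun t => ?_, fun t => ?_, ?_⟩
  · simp only [hf, hg, norm_mul, norm_cexp_I_mul_ofReal_mul_ofReal]
  · have hωc : ω * (t - (t - c)) = π := by
      rw [sub_sub_cancel, hc]; field_simp [(sub_pos.mpr hεB).ne']; ring
    rw [hf, hg]
    dsimp only
    rw [mul_cexp_mul_conj_mul_cexp, mul_cexp_mul_conj_mul_cexp, neg_mul, hωc, ofReal_neg,
      mul_neg, mul_comm I, exp_neg_pi_mul_I, exp_pi_mul_I]
  · rintro ⟨α, hα⟩
    rw [hf, hg] at hα
    refine mul_cexp_ne_phase_mul_mul_cexp_neg (by simp [csinc_zero])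
      (by simpa [mul_comm] using csinc_ofReal_mul_I_ne_zero ε)
      (mul_ne_zero pi_ne_zero (by linarith)) α hα

/-- with `c = 1/(2B-ε) > 1/(2B)`, the functions
`f(z) = sinc(εz)e^{πi(2B-ε)z}` and `g(z) = sinc(εz)e^{-πi(2B-ε)z}` lie in `PW²_B`, have the
stated Fourier representations, the same absolute values on `ℝ`, the same correlations
`f(t)conj(f(t-c))`, yet do not agree up to a global phase. -/
theorem sinc_two_line_counterexample (ε B : ℝ) (hε : 0 < ε) (hB : 0 < B) (hεB : ε < 2 * B)
    (c : ℝ) (hc : c = 1 / (2 * B - ε))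
    (f g : ℂ → ℂ)
    (hfdef : ∀ z : ℂ, f z = csinc (ε * z) * Complex.exp (Real.pi * Complex.I * (2 * B - ε) * z))
    (hgdef : ∀ z : ℂ, g z = csinc (ε * z) * Complex.exp (-(Real.pi * Complex.I * (2 * B - ε) * z))) :
    ((∀ z : ℂ, f z = (1 / ε : ℂ) *
        ∫ ξ in Set.Icc (-B) B, Set.indicator (Set.Icc (B - ε) B) (fun _ => (1 : ℂ)) ξ *
          Complex.exp (2 * Real.pi * Complex.I * ξ * z)) ∧
      MemPW B 2 f) ∧
    ((∀ z : ℂ, g z = (1 / ε : ℂ) *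
        ∫ ξ in Set.Icc (-B) B, Set.indicator (Set.Icc (-B) (-B + ε)) (fun _ => (1 : ℂ)) ξ *
          Complex.exp (2 * Real.pi * Complex.I * ξ * z)) ∧
      MemPW B 2 g) ∧
    (∀ t : ℝ, ‖f t‖ = ‖g t‖) ∧
    (∀ t : ℝ, f t * (starRingEnd ℂ) (f ((t - c : ℝ) : ℂ)) =
      g t * (starRingEnd ℂ) (g ((t - c : ℝ) : ℂ))) ∧
    ¬ ∃ α : ℝ, f = fun z => Complex.exp (Complex.I * α) * g z :=
  sinc_two_line_counterexample_general ε B hε hεB c hc f g hfdef hgdef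
end

section
/- Let B > 0, let c ∈ (0, 1/(2B)], and let f, g ∈ PW²_B be not identically zero. Suppose that |f(t)| = |g(t)| for all t ∈ ℝ and that f(t)·conj(f(t − c)) = g(t)·conj(g(t − c)) for all t ∈ ℝ. Then there exists α ∈ ℝ such that f = e^{iα} g (as functions on ℂ). -/
/-!
Both `f` and `g` are entire. On `ℝ`, `|f| = |g|` together with the correlation identity
gives `g(t) (f(t + c) g(t) - g(t + c) f(t)) = 0`, so by the identity theorem `f / g` is
`c`-periodic as a meromorphic function, hence `n c`-periodic for every `n ∈ ℤ`. For `u` with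
`g(u) ≠ 0`, the function `g(u) f - f(u) g` lies in `PW²_B` and vanishes on `u + cℤ`. As
`2 B ≤ 1 / c`, its spectrum sits inside one period of the exponentials `e^{2πi n c ξ}`, which
are complete in `L²` there (Parseval), so it vanishes identically. Thus `f = λ g`, and
`|f| = |g|` on `ℝ` forces `|λ| = 1`.
-/

open MeasureTheory Complex Real Set

open Filter Topology
open scoped ComplexConjugate

theorem mul_eq_mul_or_eq_zero_of_mul_conj_eq {a b a' b' : ℂ} (hn : ‖a'‖ = ‖b'‖)
    (h : a * conj a' = b * conj b') : a * b' = b * a' ∨ b' = 0 := by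
  refine or_iff_not_imp_right.mpr fun hb' => ?_
  have hsq : b' * conj b' = a' * conj a' := by rw [mul_conj', mul_conj', hn]
  have hb'c : conj b' ≠ 0 := (map_ne_zero _).mpr hb'
  refine sub_eq_zero.mp <| (mul_eq_zero.mp ?_).resolve_left hb'c
  linear_combination a * hsq + a' * h

namespace Differentiable

variable {f g : ℂ → ℂ}

theorem eq_zero_of_forall_ofReal_eq_zero_s18 (hf : Differentiable ℂ f) (h : ∀ t : ℝ, f t = 0) :
    f = 0 := by
  have hreal : Tendsto ((↑) : ℝ → ℂ) (𝓝[≠] 0) (𝓝[≠] 0) :=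
    tendsto_nhdsWithin_of_tendsto_nhds_of_eventually_within _
      (continuous_ofReal.tendsto' 0 0 ofReal_zero |>.mono_left nhdsWithin_le_nhds)
      (eventually_nhdsWithin_of_forall fun t ht => by simpa using ht)
  funext z
  exact (analyticOnNhd_univ_iff_differentiable.mpr hf)
    |>.eqOn_zero_of_preconnected_of_frequently_eq_zero isPreconnected_univ (mem_univ 0)
      (hreal.frequently (.of_forall h)) (mem_univ z)

theorem eq_zero_of_mul_eq_zero (hf : Differentiable ℂ f) (hg : Differentiable ℂ g)
    (hfg : f * g = 0) (hf0 : f ≠ 0) : g = 0 := by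
  have := (analyticOnNhd_univ_iff_differentiable.mpr hf).eq_zero_or_eq_zero_of_mul_eq_zero
    (analyticOnNhd_univ_iff_differentiable.mpr hg) (fun z _ => congrFun hfg z) isPreconnected_univ
  exact funext fun z => (this.resolve_left fun h => hf0 <| funext fun w => h w (mem_univ w)) z
    (mem_univ z)

end Differentiable

/-- `f / g` is `c`-periodic, stated without division so that zeros of `g` do no harm. -/
def RatioPeriodic (f g : ℂ → ℂ) (c : ℂ) : Prop :=
  ∀ z, f (z + c) * g z = g (z + c) * f z

namespace RatioPeriodic

variable {f g : ℂ → ℂ} {c d : ℂ}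

theorem neg (h : RatioPeriodic f g c) : RatioPeriodic f g (-c) := fun z => by
  have := h (z + -c)
  rw [neg_add_cancel_right] at this
  linear_combination -this

theorem add (hf : Differentiable ℂ f) (hg : Differentiable ℂ g) (hg0 : g ≠ 0)
    (hc : RatioPeriodic f g c) (hd : RatioPeriodic f g d) : RatioPeriodic f g (c + d) := by
  have hgc : (fun z => g (z + c)) ≠ 0 := fun h => hg0 <| funext fun z => by
    simpa using congrFun h (z - c)
  have key := Differentiable.eq_zero_of_mul_eq_zero (hg.comp (differentiable_id.add_const c))
    (g := fun z => f (z + (c + d)) * g z - g (z + (c + d)) * f z)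
    (((hf.comp (differentiable_id.add_const _)).mul hg).sub
      ((hg.comp (differentiable_id.add_const _)).mul hf))
    -- `g (z + c)` times the defect at `c + d` is a combination of the defects at `c` and `d`
    (funext fun z => by
      have := hd (z + c)
      rw [add_assoc] at this
      simp only [Pi.mul_apply, Function.comp_apply, id, Pi.zero_apply]
      linear_combination g z * this + g (z + (c + d)) * hc z) hgc
  exact fun z => sub_eq_zero.mp (congrFun key z)

theorem int_mul (hf : Differentiable ℂ f) (hg : Differentiable ℂ g) (hg0 : g ≠ 0)
    (h : RatioPeriodic f g c) (n : ℤ) : RatioPeriodic f g (n * c) := by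
  induction n using Int.induction_on with
  | zero => intro z; simp [mul_comm]
  | succ i ih => simpa [add_mul] using ih.add hf hg hg0 h
  | pred i ih => convert ih.add hf hg hg0 h.neg using 1; push_cast; ring

end RatioPeriodic

theorem ratioPeriodic_of_mul_conj_eq {f g : ℂ → ℂ} {c : ℝ} (hf : Differentiable ℂ f)
    (hg : Differentiable ℂ g) (hg0 : g ≠ 0) (habs : ∀ t : ℝ, ‖f t‖ = ‖g t‖)
    (hcorr : ∀ t : ℝ, f t * conj (f ((t - c : ℝ) : ℂ)) =
      g t * conj (g ((t - c : ℝ) : ℂ))) :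
    RatioPeriodic f g c := by
  set D : ℂ → ℂ := fun z => f (z + c) * g z - g (z + c) * f z
  have hD : Differentiable ℂ D :=
    ((hf.comp (differentiable_id.add_const _)).mul hg).sub
      ((hg.comp (differentiable_id.add_const _)).mul hf)
  have hgD : g * D = 0 := (hg.mul hD).eq_zero_of_forall_ofReal_eq_zero_s18 fun t => by
    have hcorr' := hcorr (t + c)
    push_cast at hcorr'
    rw [add_sub_cancel_right] at hcorr'
    rcases mul_eq_mul_or_eq_zero_of_mul_conj_eq (habs t) hcorr' with h | h
    · simp [D, h]
    · simp [h]
  exact fun z => sub_eq_zero.mp (congrFun (hg.eq_zero_of_mul_eq_zero hD hgD hg0) z)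

theorem ae_eq_zero_of_fourierCoeffOn_eq_zero {a b : ℝ} (hab : a < b) {f : ℝ → ℂ}
    (hf : MemLp f 2 (volume.restrict (Ioc a b))) (h : ∀ n, fourierCoeffOn hab f n = 0) :
    f =ᵐ[volume.restrict (Ioc a b)] 0 := by
  have hsum := hasSum_sq_fourierCoeffOn hab hf
  simp only [h, norm_zero, ne_eq, OfNat.ofNat_ne_zero, not_false_eq_true, zero_pow] at hsum
  have hint : ∫ x in Ioc a b, ‖f x‖ ^ 2 = 0 := by
    have := hasSum_zero.unique hsum
    rw [intervalIntegral.integral_of_le hab.le] at this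
    simpa [(sub_pos.mpr hab).ne'] using this.symm
  have hsq := (integral_eq_zero_iff_of_nonneg (fun x => by positivity)
    (hf.integrable_norm_pow two_ne_zero)).mp hint
  filter_upwards [hsq] with x hx
  simpa using hx

theorem ae_eq_zero_of_integral_cexp_mul_eq_zero {a b c : ℝ} (hc : 0 < c) (hab : b - a ≤ c⁻¹)
    {K : ℝ → ℂ} (hK : MemLp K 2 (volume.restrict (Icc a b)))
    (h : ∀ n : ℤ, ∫ x in Icc a b, cexp (2 * π * I * n * c * x) * K x = 0) :
    K =ᵐ[volume.restrict (Icc a b)] 0 := by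
  rw [← Measure.restrict_congr_set Ioc_ae_eq_Icc] at hK h ⊢
  -- extend `K` by zero to `(b - c⁻¹, b]`, one full period of the exponentials `e^{2πi n c x}`
  set a' := b - c⁻¹
  have ha' : a' < b := by simp [a', hc]
  have hsub : Ioc a b ⊆ Ioc a' b := Ioc_subset_Ioc_left (by linarith)
  set K' := (Ioc a b).indicator K
  have hK' : MemLp K' 2 (volume.restrict (Ioc a' b)) :=
    ((memLp_indicator_iff_restrict measurableSet_Ioc).mpr hK).restrict _
  have hcoeff : ∀ n, fourierCoeffOn ha' K' n = 0 := fun n => by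
    rw [fourierCoeffOn_eq_integral, intervalIntegral.integral_of_le ha'.le]
    have hfourier : ∀ x : ℝ, fourier (-n) (x : AddCircle (b - a')) • K' x =
        (Ioc a b).indicator (fun x => cexp (2 * π * I * (-n : ℤ) * c * x) * K x) x := fun x => by
      rw [fourier_coe_apply, smul_eq_mul, Set.indicator_mul_right]
      congr 2
      simp only [a', sub_sub_cancel, ofReal_inv]
      push_cast
      field_simp
    simp_rw [hfourier, setIntegral_indicator measurableSet_Ioc, inter_eq_right.mpr hsub, h,
      smul_zero]
  filter_upwards [ae_restrict_of_ae_restrict_of_subset hsub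
    (ae_eq_zero_of_fourierCoeffOn_eq_zero ha' hK' hcoeff), ae_restrict_mem measurableSet_Ioc]
    with x hx hxmem
  simpa [K', hxmem] using hx

theorem norm_cexp_two_pi_I_mul_le {B ξ : ℝ} (hξ : ξ ∈ Icc (-B) B) (z : ℂ) :
    ‖cexp (2 * π * I * ξ * z)‖ ≤ Real.exp (2 * π * B * ‖z‖) := by
  refine (norm_exp_le_exp_norm _).trans (Real.exp_le_exp.mpr ?_)
  have hξB : |ξ| ≤ B := abs_le.mpr hξ
  simp only [norm_mul, Complex.norm_ofNat, norm_real, Real.norm_eq_abs, abs_of_pos pi_pos,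
    norm_I, mul_one]
  gcongr

theorem MeasureTheory.Integrable.mul_cexp_two_pi_I_mul {B : ℝ} {F : ℝ → ℂ}
    (hF : Integrable F (volume.restrict (Icc (-B) B))) (z : ℂ) :
    Integrable (fun ξ => F ξ * cexp (2 * π * I * ξ * z)) (volume.restrict (Icc (-B) B)) := by
  refine (hF.bdd_mul (c := Real.exp (2 * π * B * ‖z‖)) (by fun_prop) ?_).congr
    (.of_forall fun ξ => mul_comm _ _)
  filter_upwards [ae_restrict_mem measurableSet_Icc] with ξ hξ
  exact norm_cexp_two_pi_I_mul_le hξ z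

namespace MemPW

variable {B : ℝ} {p : ENNReal} {f g : ℂ → ℂ}

theorem differentiable_s18 (hp : 1 ≤ p) (hf : MemPW B p f) : Differentiable ℂ f := by
  obtain ⟨F, hF, hrep⟩ := hf
  rw [funext hrep]
  have hFi := hF.integrable hp
  intro z₀
  set C := Real.exp (2 * π * B * (‖z₀‖ + 1)) * (2 * π * B)
  refine (hasDerivAt_integral_of_dominated_loc_of_deriv_le (bound := fun ξ => ‖F ξ‖ * C)
    (F' := fun z ξ => F ξ * (cexp (2 * π * I * ξ * z) * (2 * π * I * ξ)))
    (Metric.ball_mem_nhds z₀ one_pos) (.of_forall fun z => (hFi.mul_cexp_two_pi_I_mul z).1)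
    (hFi.mul_cexp_two_pi_I_mul z₀) (hF.1.mul (by fun_prop)) ?_ (hFi.norm.mul_const C)
    (.of_forall fun ξ z _ => ?_)).2.differentiableAt
  · filter_upwards [ae_restrict_mem measurableSet_Icc] with ξ hξ z hz
    have hz : ‖z‖ ≤ ‖z₀‖ + 1 := by
      simpa using norm_le_norm_add_norm_sub' z z₀ |>.trans (by linarith [mem_ball_iff_norm.mp hz])
    have hξB : |ξ| ≤ B := abs_le.mpr hξ
    have hB : 0 ≤ 2 * π * B := mul_nonneg (by positivity) ((abs_nonneg ξ).trans hξB)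
    rw [norm_mul, norm_mul]
    simp only [C]
    gcongr
    · exact (norm_cexp_two_pi_I_mul_le hξ z).trans
        (Real.exp_le_exp.mpr (mul_le_mul_of_nonneg_left hz hB))
    · simp only [norm_mul, Complex.norm_ofNat, norm_real, Real.norm_eq_abs, abs_of_pos pi_pos,
        norm_I, mul_one]
      gcongr
  · exact ((((hasDerivAt_id z).const_mul (2 * π * I * ξ)).cexp).const_mul (F ξ)).congr_deriv
      (by simp)

theorem const_mul (hf : MemPW B p f) (a : ℂ) : MemPW B p (fun z => a * f z) := by
  obtain ⟨F, hF, hrep⟩ := hf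
  refine ⟨fun ξ => a * F ξ, hF.const_mul a, fun z => ?_⟩
  simp_rw [hrep, mul_assoc, integral_const_mul]

theorem sub (hp : 1 ≤ p) (hf : MemPW B p f) (hg : MemPW B p g) : MemPW B p (f - g) := by
  obtain ⟨F, hF, hFrep⟩ := hf
  obtain ⟨G, hG, hGrep⟩ := hg
  refine ⟨F - G, hF.sub hG, fun z => ?_⟩
  simp_rw [Pi.sub_apply, sub_mul, hFrep, hGrep]
  exact (integral_sub ((hF.integrable hp).mul_cexp_two_pi_I_mul z)
    ((hG.integrable hp).mul_cexp_two_pi_I_mul z)).symm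

theorem eq_zero_of_forall_add_int_mul_eq_zero {c : ℝ} (hf : MemPW B 2 f) (hc : 0 < c)
    (hBc : 2 * B ≤ c⁻¹) {z₀ : ℂ} (h : ∀ n : ℤ, f (z₀ + n * c) = 0) : f = 0 := by
  obtain ⟨F, hF, hrep⟩ := hf
  set K : ℝ → ℂ := fun ξ => cexp (2 * π * I * ξ * z₀) * F ξ
  have hK : MemLp K 2 (volume.restrict (Icc (-B) B)) := by
    refine hF.of_le_mul (c := Real.exp (2 * π * B * ‖z₀‖)) ((by fun_prop : Continuous
      fun ξ : ℝ => cexp (2 * π * I * ξ * z₀)).aestronglyMeasurable.mul hF.1) ?_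
    filter_upwards [ae_restrict_mem measurableSet_Icc] with ξ hξ
    rw [norm_mul]
    gcongr
    exact norm_cexp_two_pi_I_mul_le hξ z₀
  have hK0 : K =ᵐ[volume.restrict (Icc (-B) B)] 0 := by
    refine ae_eq_zero_of_integral_cexp_mul_eq_zero hc (by linarith) hK fun n => ?_
    rw [← h n, hrep]
    congr 1 with ξ
    rw [mul_add, Complex.exp_add]
    simp only [K]
    ring_nf
  funext z
  rw [hrep, Pi.zero_apply]
  refine integral_eq_zero_of_ae ?_
  filter_upwards [hK0] with ξ hξ
  have hF0 : F ξ = 0 := (mul_eq_zero.mp hξ).resolve_left (Complex.exp_ne_zero _)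
  simp [hF0]

end MemPW

theorem exists_eq_cexp_mul_of_eq_const_mul {f g : ℂ → ℂ} (hg : Differentiable ℂ g)
    (hg0 : g ≠ 0) (habs : ∀ t : ℝ, ‖f t‖ = ‖g t‖) {w : ℂ}
    (hfg : ∀ z, f z = w * g z) :
    ∃ α : ℝ, f = fun z => cexp (I * α) * g z := by
  obtain ⟨t, ht⟩ : ∃ t : ℝ, g t ≠ 0 := by
    by_contra! h
    exact hg0 (hg.eq_zero_of_forall_ofReal_eq_zero_s18 h)
  have hw : ‖w‖ = 1 := by
    have := habs t
    rwa [hfg, norm_mul, mul_eq_right₀ (norm_ne_zero_iff.mpr ht)] at this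
  refine ⟨w.arg, funext fun z => ?_⟩
  rw [hfg, mul_comm I, ← one_mul (cexp _), ← ofReal_one, ← hw, norm_mul_exp_arg_mul_I]

theorem paley_wiener_phase_from_abs_and_correlation_general (B c : ℝ)
    (hc : c ∈ Set.Ioc (0 : ℝ) (1 / (2 * B)))
    (f g : ℂ → ℂ) (hf : MemPW B 2 f) (hg : MemPW B 2 g)
    (hg0 : g ≠ 0)
    (habs : ∀ t : ℝ, ‖f t‖ = ‖g t‖)
    (hcorr : ∀ t : ℝ, f t * (starRingEnd ℂ) (f ((t - c : ℝ) : ℂ)) =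
      g t * (starRingEnd ℂ) (g ((t - c : ℝ) : ℂ))) :
    ∃ α : ℝ, f = fun z => Complex.exp (Complex.I * α) * g z := by
  obtain ⟨hc0, hcB⟩ := hc
  have hBc : 2 * B ≤ c⁻¹ := by
    have hB : 0 < 2 * B := one_div_pos.mp (hc0.trans_le hcB)
    simpa using (le_one_div hc0 hB).mp hcB
  have hfd := hf.differentiable_s18 one_le_two
  have hgd := hg.differentiable_s18 one_le_two
  have hper := ratioPeriodic_of_mul_conj_eq hfd hgd hg0 habs hcorr
  obtain ⟨u, hu⟩ : ∃ u, g u ≠ 0 := by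
    by_contra! h
    exact hg0 (funext h)
  have hcross : (fun z => g u * f z) - (fun z => f u * g z) = 0 :=
    ((hf.const_mul (g u)).sub one_le_two (hg.const_mul (f u)))
      |>.eq_zero_of_forall_add_int_mul_eq_zero hc0 hBc fun n => by
        simpa [mul_comm] using sub_eq_zero.mpr (hper.int_mul hfd hgd hg0 n u)
  refine exists_eq_cexp_mul_of_eq_const_mul hgd hg0 habs (w := f u / g u) fun z => ?_
  rw [div_mul_eq_mul_div, eq_div_iff hu]
  have := congrFun hcross z
  simp only [Pi.sub_apply, Pi.zero_apply] at this
  linear_combination this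

/-- nonzero functions `f, g ∈ PW²_B` with the same absolute values on `ℝ`
and the same correlations `f(t)conj(f(t-c))` for a shift `0 < c ≤ 1/(2B)` agree up to a
global phase. -/
theorem paley_wiener_phase_from_abs_and_correlation (B c : ℝ) (hB : 0 < B)
    (hc : c ∈ Set.Ioc (0 : ℝ) (1 / (2 * B)))
    (f g : ℂ → ℂ) (hf : MemPW B 2 f) (hg : MemPW B 2 g)
    (hf0 : f ≠ 0) (hg0 : g ≠ 0)
    (habs : ∀ t : ℝ, ‖f t‖ = ‖g t‖)
    (hcorr : ∀ t : ℝ, f t * (starRingEnd ℂ) (f ((t - c : ℝ) : ℂ)) =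
      g t * (starRingEnd ℂ) (g ((t - c : ℝ) : ℂ))) :
    ∃ α : ℝ, f = fun z => Complex.exp (Complex.I * α) * g z :=
  paley_wiener_phase_from_abs_and_correlation_general B c hc f g hf hg hg0 habs hcorr
end
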